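/- arXiv:0803.1637 — 6 statements merged into one kernel-verified Lean document; each statement's English description precedes it below -/
import Mathlib

section
/- Let G be a bipartite graph with parts A and B in which every vertex of B has degree at least 1. Call a subset H of A ∪ B admissible if every vertex of B ∩ H has exactly one neighbor in A ∩ H. Then there exists an admissible set H with |B ∩ H| ≥ √|B|. -/
/-- In a bipartite graph with parts `A`, `B` where every vertex of `B` has degree at
least 1, there is an admissible set `H` (every vertex of `B ∩ H` has exactly one
neighbor in `A ∩ H`) with `|B ∩ H| ≥ √|B|`. -/
theorem stmt_3 {V : Type*} [Fintype V] [DecidableEq V] (G : SimpleGraph V) (A B : Finset V)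
    (hdisj : Disjoint A B) (hcover : ∀ x, x ∈ A ∪ B)
    (hbip : ∀ x y, G.Adj x y → (x ∈ A ∧ y ∈ B) ∨ (x ∈ B ∧ y ∈ A))
    (hdeg : ∀ b ∈ B, ∃ a ∈ A, G.Adj a b) :
    ∃ H : Finset V,
      (∀ b ∈ B ∩ H, ∃! a, a ∈ A ∩ H ∧ G.Adj a b) ∧
      Real.sqrt (B.card) ≤ ((B ∩ H).card : ℝ) := by
  classical
  by_cases hB : B.Nonempty
  swap
  · refine ⟨∅, by simp, ?_⟩
    simp [Finset.not_nonempty_iff_eq_empty.mp hB]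
  by_cases hstar : ∃ a ∈ A, Real.sqrt B.card ≤ ((B.filter (fun b => G.Adj a b)).card : ℝ)
  · -- star case
    obtain ⟨a, haA, hcard⟩ := hstar
    have haB : a ∉ B := Finset.disjoint_left.mp hdisj haA
    refine ⟨insert a (B.filter (fun b => G.Adj a b)), ?_, ?_⟩
    · intro b hb
      obtain ⟨hbB, hbH⟩ := Finset.mem_inter.mp hb
      have hbadj : G.Adj a b := by
        rcases Finset.mem_insert.mp hbH with h | h
        · exact absurd (h ▸ hbB) haB
        · exact (Finset.mem_filter.mp h).2
      refine ⟨a, ⟨Finset.mem_inter.mpr ⟨haA, Finset.mem_insert_self _ _⟩, hbadj⟩, ?_⟩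
      rintro a' ⟨ha', hadj'⟩
      obtain ⟨ha'A, ha'H⟩ := Finset.mem_inter.mp ha'
      rcases Finset.mem_insert.mp ha'H with h | h
      · exact h
      · exact absurd (Finset.mem_filter.mp h).1 (Finset.disjoint_left.mp hdisj ha'A)
    · have : B ∩ insert a (B.filter (fun b => G.Adj a b)) = B.filter (fun b => G.Adj a b) := by
        ext x
        simp only [Finset.mem_inter, Finset.mem_insert, Finset.mem_filter]
        constructor
        · rintro ⟨hx, h | h⟩
          · exact absurd (h ▸ hx) haB
          · exact h
        · rintro ⟨hx, hadj⟩; exact ⟨hx, Or.inr ⟨hx, hadj⟩⟩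
      rw [this]
      exact hcard
  · -- minimal dominating set case
    push_neg at hstar
    have hAdom : A ∈ A.powerset.filter (fun S => ∀ b ∈ B, ∃ a ∈ S, G.Adj a b) := by
      simp only [Finset.mem_filter, Finset.mem_powerset]
      exact ⟨subset_rfl, hdeg⟩
    obtain ⟨S, hSmem, hSmin⟩ :=
      Finset.exists_min_image (A.powerset.filter (fun S => ∀ b ∈ B, ∃ a ∈ S, G.Adj a b))
        (fun S => S.card) ⟨A, hAdom⟩
    have hSA : S ⊆ A := Finset.mem_powerset.mp (Finset.mem_filter.mp hSmem).1
    have hSdom : ∀ b ∈ B, ∃ a ∈ S, G.Adj a b := (Finset.mem_filter.mp hSmem).2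
    -- private neighbors
    have hpriv : ∀ a : V, ∃ b : V, a ∈ S →
        (b ∈ B ∧ G.Adj a b ∧ ∀ a' ∈ S, G.Adj a' b → a' = a) := by
      intro a
      by_cases haS : a ∈ S
      swap
      · exact ⟨a, fun h => absurd h haS⟩
      have hne : ¬ (∀ b ∈ B, ∃ a' ∈ S.erase a, G.Adj a' b) := by
        intro hdom'
        have hmem' : S.erase a ∈ A.powerset.filter (fun S => ∀ b ∈ B, ∃ a ∈ S, G.Adj a b) := by
          simp only [Finset.mem_filter, Finset.mem_powerset]
          exact ⟨(Finset.erase_subset a S).trans hSA, hdom'⟩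
        have h1 := hSmin _ hmem'
        have h2 : (S.erase a).card < S.card := Finset.card_erase_lt_of_mem haS
        omega
      push_neg at hne
      obtain ⟨b, hbB, hb⟩ := hne
      obtain ⟨a0, ha0S, ha0adj⟩ := hSdom b hbB
      have ha0 : a0 = a := by
        by_contra h
        exact hb a0 (Finset.mem_erase.mpr ⟨h, ha0S⟩) ha0adj
      refine ⟨b, fun _ => ⟨hbB, ha0 ▸ ha0adj, ?_⟩⟩
      intro a' ha'S hadj'
      by_contra h
      exact hb a' (Finset.mem_erase.mpr ⟨h, ha'S⟩) hadj'
    choose f hf using hpriv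
    have hfB : ∀ a ∈ S, f a ∈ B := fun a ha => (hf a ha).1
    have hfadj : ∀ a ∈ S, G.Adj a (f a) := fun a ha => (hf a ha).2.1
    have hfuniq : ∀ a ∈ S, ∀ a' ∈ S, G.Adj a' (f a) → a' = a := fun a ha => (hf a ha).2.2
    have hinj : Set.InjOn f S := by
      intro a1 h1 a2 h2 heq
      have : G.Adj a2 (f a1) := heq ▸ hfadj a2 h2
      exact (hfuniq a1 h1 a2 h2 this).symm
    have hSne : S.Nonempty := by
      obtain ⟨b, hbB⟩ := hB
      obtain ⟨a, haS, _⟩ := hSdom b hbB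
      exact ⟨a, haS⟩
    -- counting: B.card ≤ ∑ over S of degrees < S.card * √n
    have hsub : B ⊆ S.biUnion (fun a => B.filter (fun b => G.Adj a b)) := by
      intro b hbB
      obtain ⟨a, haS, hadj⟩ := hSdom b hbB
      exact Finset.mem_biUnion.mpr ⟨a, haS, Finset.mem_filter.mpr ⟨hbB, hadj⟩⟩
    have hcount : (B.card : ℝ) ≤ ∑ a ∈ S, ((B.filter (fun b => G.Adj a b)).card : ℝ) := by
      have h1 : B.card ≤ ∑ a ∈ S, (B.filter (fun b => G.Adj a b)).card :=
        le_trans (Finset.card_le_card hsub) (Finset.card_biUnion_le)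
      exact_mod_cast h1
    have hlt : (B.card : ℝ) < S.card * Real.sqrt B.card := by
      calc (B.card : ℝ) ≤ ∑ a ∈ S, ((B.filter (fun b => G.Adj a b)).card : ℝ) := hcount
        _ < ∑ _a ∈ S, Real.sqrt B.card := by
            apply Finset.sum_lt_sum_of_nonempty hSne
            intro a haS
            exact hstar a (hSA haS)
        _ = S.card * Real.sqrt B.card := by rw [Finset.sum_const, nsmul_eq_mul]
    have hsqrtpos : 0 < Real.sqrt B.card := by
      apply Real.sqrt_pos.mpr
      exact_mod_cast Finset.card_pos.mpr hB
    have hScard : Real.sqrt B.card ≤ (S.card : ℝ) := by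
      have hsq : Real.sqrt B.card * Real.sqrt B.card = (B.card : ℝ) :=
        Real.mul_self_sqrt (by positivity)
      nlinarith [hlt, hsq, hsqrtpos]
    refine ⟨S ∪ S.image f, ?_, ?_⟩
    · intro b hb
      obtain ⟨hbB, hbH⟩ := Finset.mem_inter.mp hb
      have hbS : b ∉ S := fun h => Finset.disjoint_left.mp hdisj (hSA h) hbB
      have : b ∈ S.image f := by
        rcases Finset.mem_union.mp hbH with h | h
        · exact absurd h hbS
        · exact h
      obtain ⟨a, haS, hfa⟩ := Finset.mem_image.mp this
      refine ⟨a, ⟨Finset.mem_inter.mpr ⟨hSA haS, Finset.mem_union_left _ haS⟩,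
        hfa ▸ hfadj a haS⟩, ?_⟩
      rintro a' ⟨ha', hadj'⟩
      obtain ⟨ha'A, ha'H⟩ := Finset.mem_inter.mp ha'
      have ha'S : a' ∈ S := by
        rcases Finset.mem_union.mp ha'H with h | h
        · exact h
        · obtain ⟨a2, ha2, hfa2⟩ := Finset.mem_image.mp h
          exact absurd (hfa2 ▸ hfB a2 ha2) (Finset.disjoint_left.mp hdisj ha'A)
      exact hfuniq a haS a' ha'S (hfa ▸ hadj')
    · have hBH : B ∩ (S ∪ S.image f) = S.image f := by
        ext x
        simp only [Finset.mem_inter, Finset.mem_union, Finset.mem_image]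
        constructor
        · rintro ⟨hxB, hx | hx⟩
          · exact absurd hxB (Finset.disjoint_left.mp hdisj (hSA hx))
          · exact hx
        · rintro ⟨a, haS, rfl⟩
          exact ⟨hfB a haS, Or.inr ⟨a, haS, rfl⟩⟩
      rw [hBH, Finset.card_image_of_injOn hinj]
      exact hScard
end

section
/- Let G be a bipartite graph with parts A and B in which every vertex of B has degree at least 1. Then there exists an admissible set H with |B ∩ H| ≥ c·|B|/log|B| for some absolute constant c > 0 (one may take c so that the bound holds with |B ∩ H| ≥ |B|/(8 log₂|B|) for |B| ≥ 2). -/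
open Finset

section Aux

variable {V : Type*} [DecidableEq V]

/-- Key weighted-sum identity: summing over subsets of `e ∪ D` a weight times a
function of the intersection with `e` reduces to a sum over subsets of `e`. -/
lemma sum_w_phi (p : ℝ) (e : Finset V) (φ : Finset V → ℝ) :
    ∀ D : Finset V, Disjoint e D →
      ∑ S ∈ (e ∪ D).powerset, p ^ S.card * (1 - p) ^ ((e ∪ D).card - S.card) * φ (S ∩ e)
        = ∑ T ∈ e.powerset, p ^ T.card * (1 - p) ^ (e.card - T.card) * φ T := by
  intro D
  induction D using Finset.induction_on with
  | empty =>
    intro _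
    rw [Finset.union_empty]
    refine Finset.sum_congr rfl fun S hS => ?_
    rw [Finset.inter_eq_left.mpr (Finset.mem_powerset.mp hS)]
  | insert a D ha ih =>
    intro hdisj
    have hae : a ∉ e := Finset.disjoint_right.mp hdisj (Finset.mem_insert_self a D)
    have hD : Disjoint e D := hdisj.mono_right (Finset.subset_insert a D)
    have hY : a ∉ e ∪ D := by
      simp only [Finset.mem_union]
      rintro (h | h)
      · exact hae h
      · exact ha h
    rw [Finset.union_insert, Finset.powerset_insert, Finset.sum_union]
    · rw [Finset.sum_image (fun S hS S' hS' h => by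
        have hS1 : a ∉ S := fun hc => hY (Finset.mem_powerset.mp hS hc)
        have hS2 : a ∉ S' := fun hc => hY (Finset.mem_powerset.mp hS' hc)
        have := congrArg (Finset.erase · a) h
        simpa [Finset.erase_insert hS1, Finset.erase_insert hS2] using this)]
      rw [← Finset.sum_add_distrib, ← ih hD]
      refine Finset.sum_congr rfl fun S hS => ?_
      have hSY : S ⊆ e ∪ D := Finset.mem_powerset.mp hS
      have haS : a ∉ S := fun hc => hY (hSY hc)
      have hcard : (insert a (e ∪ D)).card = (e ∪ D).card + 1 :=
        Finset.card_insert_of_notMem hY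
      have hScard : (insert a S).card = S.card + 1 := Finset.card_insert_of_notMem haS
      have hle : S.card ≤ (e ∪ D).card := Finset.card_le_card hSY
      have hint : insert a S ∩ e = S ∩ e := Finset.insert_inter_of_notMem hae
      rw [hcard, hScard, hint]
      have h1 : (e ∪ D).card + 1 - S.card = ((e ∪ D).card - S.card) + 1 := by omega
      have h2 : (e ∪ D).card + 1 - (S.card + 1) = (e ∪ D).card - S.card := by omega
      rw [h1, h2, pow_succ, pow_succ]
      ring
    · rw [Finset.disjoint_right]
      rintro S hS hS'
      rcases Finset.mem_image.mp hS with ⟨T, hT, rfl⟩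
      have : a ∉ insert a T := fun hc => hY (Finset.mem_powerset.mp hS' hc)
      exact this (Finset.mem_insert_self a T)

lemma sum_w_one (p : ℝ) (X : Finset V) :
    ∑ S ∈ X.powerset, p ^ S.card * (1 - p) ^ (X.card - S.card) = 1 := by
  have h := sum_w_phi p (∅ : Finset V) (fun _ => (1 : ℝ)) X (by simp)
  simpa using h

lemma sum_singletons (p : ℝ) (e : Finset V) :
    ∑ T ∈ e.powerset, p ^ T.card * (1 - p) ^ (e.card - T.card) *
        (if T.card = 1 then (1 : ℝ) else 0)
      = (e.card : ℝ) * (p * (1 - p) ^ (e.card - 1)) := by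
  have h1 : ∀ T ∈ e.powerset,
      p ^ T.card * (1 - p) ^ (e.card - T.card) * (if T.card = 1 then (1 : ℝ) else 0)
        = if T.card = 1 then p ^ T.card * (1 - p) ^ (e.card - T.card) else 0 := by
    intro T _; split <;> simp
  rw [Finset.sum_congr rfl h1, ← Finset.sum_filter]
  have h2 : e.powerset.filter (fun T => T.card = 1) = e.image (fun a => {a}) := by
    ext T
    simp only [Finset.mem_filter, Finset.mem_powerset, Finset.mem_image, Finset.card_eq_one]
    constructor
    · rintro ⟨hTe, a, rfl⟩
      exact ⟨a, hTe (Finset.mem_singleton_self a), rfl⟩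
    · rintro ⟨a, ha, rfl⟩
      exact ⟨Finset.singleton_subset_iff.mpr ha, a, rfl⟩
  rw [h2, Finset.sum_image (by intro x _ y _ h; simpa using h)]
  have h3 : ∀ a ∈ e, p ^ ({a} : Finset V).card * (1 - p) ^ (e.card - ({a} : Finset V).card)
      = p * (1 - p) ^ (e.card - 1) := by
    intro a _; simp [pow_one]
  rw [Finset.sum_congr rfl h3, Finset.sum_const, nsmul_eq_mul]

/-- Averaging / first-moment argument: there is a subset `S` of `X` such that many
`b ∈ B'` have `|E b ∩ S| = 1`. -/
lemma exists_good (X B' : Finset V) (E : V → Finset V) (p : ℝ)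
    (hp0 : 0 < p) (hp1 : p ≤ 1) (hEX : ∀ b ∈ B', E b ⊆ X)
    (hbound : ∀ b ∈ B', (1 / 4 : ℝ) ≤ (E b).card * (p * (1 - p) ^ ((E b).card - 1))) :
    ∃ S ⊆ X, (B'.card : ℝ) / 4 ≤ ((B'.filter fun b => (E b ∩ S).card = 1).card : ℝ) := by
  classical
  set w : Finset V → ℝ := fun S => p ^ S.card * (1 - p) ^ (X.card - S.card) with hw
  have hwnn : ∀ S, 0 ≤ w S := fun S => by
    apply mul_nonneg (pow_nonneg hp0.le _) (pow_nonneg (by linarith) _)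
  set g : Finset V → ℝ := fun S => ((B'.filter fun b => (E b ∩ S).card = 1).card : ℝ) with hg
  have hgsum : ∀ S, g S = ∑ b ∈ B', (if (E b ∩ S).card = 1 then (1 : ℝ) else 0) := by
    intro S
    have h := Finset.card_filter (fun b => (E b ∩ S).card = 1) B'
    calc g S = ((B'.filter fun b => (E b ∩ S).card = 1).card : ℝ) := rfl
      _ = ∑ b ∈ B', (if (E b ∩ S).card = 1 then (1 : ℝ) else 0) := by
          rw [h]; push_cast; rfl
  -- first moment computation
  have hmain : ∑ S ∈ X.powerset, w S * g S
      = ∑ b ∈ B', ((E b).card : ℝ) * (p * (1 - p) ^ ((E b).card - 1)) := by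
    have : ∑ S ∈ X.powerset, w S * g S
        = ∑ b ∈ B', ∑ S ∈ X.powerset, w S * (if (E b ∩ S).card = 1 then (1 : ℝ) else 0) := by
      rw [Finset.sum_comm]
      refine Finset.sum_congr rfl fun S _ => ?_
      rw [hgsum, Finset.mul_sum]
    rw [this]
    refine Finset.sum_congr rfl fun b hb => ?_
    have hsub : E b ⊆ X := hEX b hb
    have hXeq : E b ∪ (X \ E b) = X := Finset.union_sdiff_of_subset hsub
    have hdisj : Disjoint (E b) (X \ E b) := Finset.disjoint_sdiff
    have h := sum_w_phi p (E b) (fun T => if T.card = 1 then (1 : ℝ) else 0) (X \ E b) hdisj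
    rw [hXeq] at h
    calc ∑ S ∈ X.powerset, w S * (if (E b ∩ S).card = 1 then (1 : ℝ) else 0)
        = ∑ S ∈ X.powerset, p ^ S.card * (1 - p) ^ (X.card - S.card) *
            (if (S ∩ E b).card = 1 then (1 : ℝ) else 0) := by
          refine Finset.sum_congr rfl fun S _ => ?_
          rw [Finset.inter_comm]
      _ = ∑ T ∈ (E b).powerset, p ^ T.card * (1 - p) ^ ((E b).card - T.card) *
            (if T.card = 1 then (1 : ℝ) else 0) := h
      _ = ((E b).card : ℝ) * (p * (1 - p) ^ ((E b).card - 1)) := sum_singletons p (E b)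
  -- pick the maximizer
  obtain ⟨S₀, hS₀, hmax⟩ := Finset.exists_max_image X.powerset g
    ⟨∅, Finset.mem_powerset.mpr (Finset.empty_subset X)⟩
  refine ⟨S₀, Finset.mem_powerset.mp hS₀, ?_⟩
  have h1 : (B'.card : ℝ) / 4 = ∑ _b ∈ B', (1 / 4 : ℝ) := by
    rw [Finset.sum_const, nsmul_eq_mul]; ring
  have h2 : (B'.card : ℝ) / 4 ≤ ∑ S ∈ X.powerset, w S * g S := by
    rw [hmain, h1]
    exact Finset.sum_le_sum hbound
  have h3 : ∑ S ∈ X.powerset, w S * g S ≤ g S₀ := by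
    calc ∑ S ∈ X.powerset, w S * g S ≤ ∑ S ∈ X.powerset, w S * g S₀ := by
          refine Finset.sum_le_sum fun S hS => ?_
          exact mul_le_mul_of_nonneg_left (hmax S hS) (hwnn S)
      _ = (∑ S ∈ X.powerset, w S) * g S₀ := by rw [← Finset.sum_mul]
      _ = g S₀ := by rw [sum_w_one]; ring
  exact le_trans h2 h3

/-- Numeric estimate: for `D ≤ d < 2D`, `d · p · (1-p)^(d-1) ≥ 1/4` where `p = 1/(2D)`. -/
lemma quarter_le (D : ℕ) (hD : 1 ≤ D) :
    ∀ d : ℕ, D ≤ d → d < 2 * D →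
      (1 / 4 : ℝ) ≤ (d : ℝ) * ((1 / (2 * D)) * (1 - 1 / (2 * D)) ^ (d - 1)) := by
  have hDpos : (0 : ℝ) < D := by exact_mod_cast hD
  have h2D : (0 : ℝ) < 2 * D := by linarith
  set p : ℝ := 1 / (2 * D) with hp
  have hppos : 0 < p := by positivity
  have hple : p ≤ 1 / 2 := by
    rw [hp]
    rw [div_le_div_iff₀ h2D (by norm_num)]
    have hD1 : (1 : ℝ) ≤ D := by exact_mod_cast hD
    linarith
  have h1p : (0 : ℝ) ≤ 1 - p := by linarith
  intro d hd
  induction d, hd using Nat.le_induction with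
  | base =>
    intro _
    have hDp : (D : ℝ) * p = 1 / 2 := by
      rw [hp]; field_simp
    have hber : 1 - (D - 1 : ℝ) * p ≤ (1 - p) ^ (D - 1) := by
      have := one_add_mul_le_pow (a := -p) (by linarith) (D - 1)
      have hcast : ((D - 1 : ℕ) : ℝ) = (D : ℝ) - 1 := by
        have : (1 : ℕ) ≤ D := hD
        push_cast [Nat.cast_sub this]
        ring
      rw [hcast] at this
      have heq : (1 : ℝ) - p = 1 + -p := by ring
      rw [heq]
      linarith [this]
    have hhalf : (1 / 2 : ℝ) ≤ 1 - ((D : ℝ) - 1) * p := by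
      have : ((D : ℝ) - 1) * p ≤ (D : ℝ) * p := by
        apply mul_le_mul_of_nonneg_right (by linarith) hppos.le
      rw [hDp] at this
      linarith
    calc (1 / 4 : ℝ) = (1 / 2) * (1 / 2) := by norm_num
      _ ≤ (1 / 2) * ((1 - p) ^ (D - 1)) := by
          apply mul_le_mul_of_nonneg_left _ (by norm_num)
          linarith
      _ = (D : ℝ) * (p * (1 - p) ^ (D - 1)) := by rw [← hDp]; ring
  | succ d hDd ih =>
    intro hlt
    have hdlt : d < 2 * D := by omega
    have hprev := ih hdlt
    have hd1 : 1 ≤ d := le_trans hD hDd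
    have hpowsplit : (1 - p) ^ (d + 1 - 1) = (1 - p) ^ (d - 1) * (1 - p) := by
      have : d + 1 - 1 = (d - 1) + 1 := by omega
      rw [this, pow_succ]
    have hstep : (d : ℝ) ≤ ((d : ℝ) + 1) * (1 - p) := by
      have h1 : ((d : ℝ) + 1) * p ≤ 1 := by
        rw [hp, mul_one_div, div_le_one h2D]
        exact_mod_cast (show (d + 1 : ℕ) ≤ 2 * D by omega)
      nlinarith
    calc (1 / 4 : ℝ) ≤ (d : ℝ) * (p * (1 - p) ^ (d - 1)) := hprev
      _ ≤ ((d : ℝ) + 1) * (1 - p) * (p * (1 - p) ^ (d - 1)) := by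
          apply mul_le_mul_of_nonneg_right hstep
          positivity
      _ = ((d : ℝ) + 1) * (p * ((1 - p) ^ (d - 1) * (1 - p))) := by ring
      _ = ((d + 1 : ℕ) : ℝ) * (p * (1 - p) ^ (d + 1 - 1)) := by
          rw [hpowsplit]; push_cast; ring

end Aux

/-- In a bipartite graph with parts `A`, `B` (`|B| ≥ 2`) where every vertex of `B`
has degree at least 1, there is an admissible set `H` with
`|B ∩ H| ≥ |B| / (8 log₂ |B|)`. -/
theorem stmt_6 {V : Type*} [Fintype V] [DecidableEq V] (G : SimpleGraph V)
    (A B : Finset V) (hdisj : Disjoint A B) (hcover : ∀ x, x ∈ A ∪ B)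
    (hbip : ∀ x y, G.Adj x y → (x ∈ A ∧ y ∈ B) ∨ (x ∈ B ∧ y ∈ A))
    (hdeg : ∀ b ∈ B, ∃ a ∈ A, G.Adj a b) (hB : 2 ≤ B.card) :
    ∃ H : Finset V,
      (∀ b ∈ B ∩ H, ∃! a, a ∈ A ∩ H ∧ G.Adj a b) ∧
      (B.card : ℝ) / (8 * Real.logb 2 B.card) ≤ ((B ∩ H).card : ℝ) := by
  classical
  choose! f hfA hfadj using hdeg
  set A' : Finset V := B.image f with hA'
  have hA'A : A' ⊆ A := by
    intro x hx
    rcases Finset.mem_image.mp hx with ⟨b, hb, rfl⟩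
    exact hfA b hb
  set E : V → Finset V := fun b => A'.filter (fun a => G.Adj a b) with hE
  have hEsub : ∀ b, E b ⊆ A' := fun b => Finset.filter_subset _ _
  have hfEmem : ∀ b ∈ B, f b ∈ E b := fun b hb =>
    Finset.mem_filter.mpr ⟨Finset.mem_image_of_mem f hb, hfadj b hb⟩
  have hEne : ∀ b ∈ B, (E b).card ≠ 0 := fun b hb =>
    (Finset.card_pos.mpr ⟨f b, hfEmem b hb⟩).ne'
  have hEle : ∀ b, (E b).card ≤ B.card := fun b =>
    le_trans (Finset.card_le_card (hEsub b)) Finset.card_image_le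
  set L := Nat.log 2 B.card with hL
  have hfib : B.card
      = ∑ i ∈ Finset.range (L + 1), (B.filter fun b => Nat.log 2 (E b).card = i).card := by
    apply Finset.card_eq_sum_card_fiberwise
    intro b _
    simp only [Finset.mem_coe, Finset.mem_range]
    have := Nat.log_mono_right (b := 2) (hEle b)
    omega
  have hex : ∃ i ∈ Finset.range (L + 1),
      B.card ≤ (L + 1) * (B.filter fun b => Nat.log 2 (E b).card = i).card := by
    apply Finset.exists_le_of_sum_le ⟨0, Finset.mem_range.mpr (Nat.succ_pos L)⟩
    rw [Finset.sum_const, Finset.card_range, ← Finset.mul_sum, ← hfib, smul_eq_mul]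
  obtain ⟨i, _, hBi⟩ := hex
  set B' := B.filter (fun b => Nat.log 2 (E b).card = i) with hB'
  have hB'B : B' ⊆ B := Finset.filter_subset _ _
  set D := 2 ^ i with hD
  have hDone : 1 ≤ D := Nat.one_le_two_pow
  have hsize : ∀ b ∈ B', D ≤ (E b).card ∧ (E b).card < 2 * D := by
    intro b hb
    obtain ⟨hbB, hlog⟩ := Finset.mem_filter.mp hb
    constructor
    · have h := Nat.pow_log_le_self 2 (hEne b hbB)
      rw [hlog] at h
      exact h
    · have h := Nat.lt_pow_succ_log_self (by norm_num : 1 < 2) (E b).card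
      rw [hlog] at h
      calc (E b).card < 2 ^ (i + 1) := h
        _ = 2 * D := by rw [hD, pow_succ]; ring
  set p : ℝ := 1 / (2 * (D : ℝ)) with hp
  have hD0 : (0 : ℝ) < (D : ℝ) := by exact_mod_cast hDone
  have hp0 : 0 < p := by rw [hp]; positivity
  have hD1R : (1 : ℝ) ≤ (D : ℝ) := by exact_mod_cast hDone
  have hp1 : p ≤ 1 := by
    rw [hp, div_le_one (by linarith)]
    linarith
  have hbound : ∀ b ∈ B', (1 / 4 : ℝ) ≤ ((E b).card : ℝ) * (p * (1 - p) ^ ((E b).card - 1)) := by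
    intro b hb
    obtain ⟨h1, h2⟩ := hsize b hb
    exact quarter_le D hDone (E b).card h1 h2
  obtain ⟨S, hSsub, hgood⟩ := exists_good A' B' E p hp0 hp1 (fun b _ => hEsub b) hbound
  set goodB := B'.filter (fun b => (E b ∩ S).card = 1) with hgB
  have hgBB : goodB ⊆ B := fun x hx => hB'B (Finset.filter_subset _ _ hx)
  have hBH : B ∩ (S ∪ goodB) = goodB := by
    ext x
    simp only [Finset.mem_inter, Finset.mem_union]
    constructor
    · rintro ⟨hxB, hx | hx⟩
      · exact absurd hxB (Finset.disjoint_left.mp hdisj (hA'A (hSsub hx)))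
      · exact hx
    · intro hx
      exact ⟨hgBB hx, Or.inr hx⟩
  refine ⟨S ∪ goodB, ?_, ?_⟩
  · intro b hb
    rw [hBH] at hb
    obtain ⟨hbB', hcard⟩ := Finset.mem_filter.mp hb
    obtain ⟨a₀, ha₀⟩ := Finset.card_eq_one.mp hcard
    have ha₀mem : a₀ ∈ E b ∩ S := ha₀ ▸ Finset.mem_singleton_self a₀
    obtain ⟨ha₀E, ha₀S⟩ := Finset.mem_inter.mp ha₀mem
    obtain ⟨ha₀A', hadj⟩ := Finset.mem_filter.mp ha₀E
    refine ⟨a₀, ⟨Finset.mem_inter.mpr ⟨hA'A ha₀A', Finset.mem_union_left _ ha₀S⟩, hadj⟩, ?_⟩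
    rintro a ⟨haAH, hadj'⟩
    obtain ⟨haA, haH⟩ := Finset.mem_inter.mp haAH
    have haS : a ∈ S := by
      rcases Finset.mem_union.mp haH with h | h
      · exact h
      · exact absurd (hgBB h) (Finset.disjoint_left.mp hdisj haA)
    have haE : a ∈ E b := Finset.mem_filter.mpr ⟨hSsub haS, hadj'⟩
    have : a ∈ E b ∩ S := Finset.mem_inter.mpr ⟨haE, haS⟩
    rw [ha₀] at this
    exact Finset.mem_singleton.mp this
  · rw [hBH]
    have hm2 : (2 : ℝ) ≤ (B.card : ℝ) := by exact_mod_cast hB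
    have hmpos : (0 : ℝ) < (B.card : ℝ) := by linarith
    have hlogb1 : (1 : ℝ) ≤ Real.logb 2 (B.card : ℝ) := by
      have := Real.logb_le_logb_of_le (b := 2) (by norm_num) (by norm_num : (0:ℝ) < 2) hm2
      rwa [Real.logb_self_eq_one (by norm_num)] at this
    have hLle : (L : ℝ) ≤ Real.logb 2 (B.card : ℝ) := by
      have hpow : ((2 : ℕ) ^ L : ℝ) ≤ (B.card : ℝ) := by
        exact_mod_cast Nat.pow_log_le_self 2 (by omega : B.card ≠ 0)
      have h1 : Real.logb 2 ((2 : ℝ) ^ L) = L := by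
        rw [Real.logb_pow, Real.logb_self_eq_one (by norm_num), mul_one]
      calc (L : ℝ) = Real.logb 2 ((2 : ℝ) ^ L) := h1.symm
        _ ≤ Real.logb 2 (B.card : ℝ) := by
            apply Real.logb_le_logb_of_le (by norm_num) (by positivity)
            exact_mod_cast hpow
    have hBicard : (B.card : ℝ) ≤ ((L : ℝ) + 1) * (B'.card : ℝ) := by
      exact_mod_cast hBi
    have hq : (B'.card : ℝ) / 4 ≤ (goodB.card : ℝ) := hgood
    have hL1pos : (0 : ℝ) < (L : ℝ) + 1 := by positivity
    have hstep1 : (B.card : ℝ) / (4 * ((L : ℝ) + 1)) ≤ (B'.card : ℝ) / 4 := by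
      rw [div_le_div_iff₀ (by positivity) (by norm_num)]
      nlinarith
    have hstep2 : (B.card : ℝ) / (8 * Real.logb 2 (B.card : ℝ))
        ≤ (B.card : ℝ) / (4 * ((L : ℝ) + 1)) := by
      apply div_le_div_of_nonneg_left (by linarith) (by positivity)
      linarith
    linarith
end

section
/- For each m ≥ 1 there exists a connected bipartite graph on m² vertices in which every induced tree has at most 2m − 1 vertices. -/
open SimpleGraph Finset

/-- level of a grid vertex -/
def lv8 {m : ℕ} (v : Fin m × Fin m) : ℕ := v.1.1 + v.2.1

def myG8 (m : ℕ) : SimpleGraph (Fin m × Fin m) where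
  Adj u v := lv8 u = lv8 v + 1 ∨ lv8 v = lv8 u + 1
  symm := by constructor; intro u v h; tauto
  loopless := by constructor; intro v h; omega

lemma myG8_adj {m : ℕ} {u v : Fin m × Fin m} :
    (myG8 m).Adj u v ↔ (lv8 u = lv8 v + 1 ∨ lv8 v = lv8 u + 1) := Iff.rfl

lemma lv8_lt {m : ℕ} (v : Fin m × Fin m) : lv8 v ≤ 2 * m - 2 := by
  have h1 := v.1.2; have h2 := v.2.2; unfold lv8; omega

lemma myG8_reach {m : ℕ} (hm : 0 < m) :
    ∀ n (v : Fin m × Fin m), lv8 v = n → (myG8 m).Reachable v (⟨0, hm⟩, ⟨0, hm⟩) := by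
  intro n
  induction n with
  | zero =>
    intro v hv
    unfold lv8 at hv
    have h1 : v.1 = ⟨0, hm⟩ := Fin.ext (by simp; omega)
    have h2 : v.2 = ⟨0, hm⟩ := Fin.ext (by simp; omega)
    rw [show v = (⟨0, hm⟩, ⟨0, hm⟩) from Prod.ext h1 h2]
  | succ n ih =>
    intro v hv
    unfold lv8 at hv
    have hb1 := v.1.2
    by_cases h : 0 < v.1.1
    · refine Reachable.trans (Adj.reachable ?_) (ih (⟨v.1.1 - 1, by omega⟩, v.2) ?_)
      · rw [myG8_adj]; left; show v.1.1 + v.2.1 = (v.1.1 - 1) + v.2.1 + 1; omega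
      · show v.1.1 - 1 + v.2.1 = n; omega
    · have h2 : 0 < v.2.1 := by omega
      refine Reachable.trans (Adj.reachable ?_) (ih (v.1, ⟨v.2.1 - 1, by omega⟩) ?_)
      · rw [myG8_adj]; left; show v.1.1 + v.2.1 = v.1.1 + (v.2.1 - 1) + 1; omega
      · show v.1.1 + (v.2.1 - 1) = n; omega

/-- intermediate value along a walk in the induced graph -/
lemma walk_ivt {m : ℕ} {s : Set (Fin m × Fin m)} {a b : s}
    (p : ((myG8 m).induce s).Walk a b) (k : ℕ)
    (hk : min (lv8 a.1) (lv8 b.1) ≤ k ∧ k ≤ max (lv8 a.1) (lv8 b.1)) :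
    ∃ v ∈ p.support, lv8 (v : s).1 = k := by
  induction p with
  | nil =>
    refine ⟨_, SimpleGraph.Walk.start_mem_support _, ?_⟩
    omega
  | @cons a c b h p ih =>
    by_cases hka : lv8 a.1 = k
    · exact ⟨a, SimpleGraph.Walk.start_mem_support _, hka⟩
    · have hadj : lv8 a.1 = lv8 c.1 + 1 ∨ lv8 c.1 = lv8 a.1 + 1 := h
      obtain ⟨v, hv, hvk⟩ := ih ⟨by omega, by omega⟩
      exact ⟨v, by simp [hv], hvk⟩

lemma ne_of_lv8 {m : ℕ} {s : Set (Fin m × Fin m)} {a b : s}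
    (h : lv8 a.1 ≠ lv8 b.1) : a ≠ b := fun hab => h (by rw [hab])

/-- For each `m ≥ 1` there exists a connected bipartite graph on `m²` vertices in
which every induced tree has at most `2m − 1` vertices. -/
theorem stmt_8 (m : ℕ) (hm : 1 ≤ m) :
    ∃ (V : Type) (_ : Fintype V) (G : SimpleGraph V),
      Fintype.card V = m ^ 2 ∧ G.Connected ∧ G.Colorable 2 ∧
      ∀ s : Finset V, (G.induce (s : Set V)).IsTree → s.card ≤ 2 * m - 1 := by
  haveI : Nonempty (Fin m) := ⟨⟨0, hm⟩⟩
  refine ⟨Fin m × Fin m, inferInstance, myG8 m, ?_, ?_, ?_, ?_⟩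
  · simp [Fintype.card_prod, sq]
  · exact ⟨fun u v =>
      (myG8_reach hm _ u rfl).trans (myG8_reach hm _ v rfl).symm⟩
  · exact ⟨⟨fun v => ⟨lv8 v % 2, Nat.mod_lt _ two_pos⟩, by
      intro u v h hc
      have h' : lv8 u = lv8 v + 1 ∨ lv8 v = lv8 u + 1 := h
      have : lv8 u % 2 = lv8 v % 2 := congrArg Fin.val hc
      omega⟩⟩
  · intro s hst
    set W := (myG8 m).induce (s : Set (Fin m × Fin m)) with hW
    have hconn := hst.isConnected
    have hac := hst.IsAcyclic
    obtain ⟨⟨v0, hv0⟩⟩ := hconn.nonempty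
    have hsne : s.Nonempty := ⟨v0, hv0⟩
    have htne : (s.image lv8).Nonempty := hsne.image _
    set i := (s.image lv8).min' htne with hi
    set j := (s.image lv8).max' htne with hj
    have hlev : ∀ v ∈ s, i ≤ lv8 v ∧ lv8 v ≤ j := fun v hv =>
      ⟨Finset.min'_le _ _ (mem_image_of_mem _ hv), Finset.le_max' _ _ (mem_image_of_mem _ hv)⟩
    obtain ⟨u0, hu0s, hu0⟩ := Finset.mem_image.1 ((s.image lv8).min'_mem htne)
    obtain ⟨w0, hw0s, hw0⟩ := Finset.mem_image.1 ((s.image lv8).max'_mem htne)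
    have hu0' : lv8 u0 = i := by rw [hi]; exact hu0
    have hw0' : lv8 w0 = j := by rw [hj]; exact hw0
    have hij : i ≤ j := by have := (hlev u0 hu0s).2; omega
    have hj2 : j ≤ 2 * m - 2 := by have := lv8_lt w0; omega
    have hint : ∀ k, i ≤ k → k ≤ j → ∃ v ∈ s, lv8 v = k := by
      intro k hik hkj
      obtain ⟨p⟩ := hconn.preconnected ⟨u0, hu0s⟩ ⟨w0, hw0s⟩
      obtain ⟨v, _, hvk⟩ := walk_ivt p k
        ⟨by show min (lv8 u0) (lv8 w0) ≤ k; omega,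
         by show k ≤ max (lv8 u0) (lv8 w0); omega⟩
      exact ⟨v.1, v.2, hvk⟩
    rcases eq_or_lt_of_le hij with heq | hlt
    · -- single level: no edges, so card ≤ 1
      have hcard1 : s.card ≤ 1 := by
        by_contra hcard
        push_neg at hcard
        obtain ⟨u, hu, v, hv, huv⟩ := Finset.one_lt_card.mp hcard
        obtain ⟨p⟩ := hconn.preconnected ⟨u, hu⟩ ⟨v, hv⟩
        have hlen : 0 < p.length := by
          rcases Nat.eq_zero_or_pos p.length with h0 | h0
          · exact absurd (congrArg Subtype.val (SimpleGraph.Walk.eq_of_length_eq_zero h0)) huv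
          · exact h0
        have hadj := p.adj_getVert_succ hlen
        have h' : lv8 (p.getVert 0).1 = lv8 (p.getVert 1).1 + 1 ∨
            lv8 (p.getVert 1).1 = lv8 (p.getVert 0).1 + 1 := hadj
        have h1 := hlev (p.getVert 0).1 (p.getVert 0).2
        have h2 := hlev (p.getVert 1).1 (p.getVert 1).2
        omega
      omega
    · -- i < j
      have hcardsum : s.card =
          ∑ k ∈ Finset.Icc i j, (s.filter (fun v => lv8 v = k)).card :=
        Finset.card_eq_sum_card_fiberwise
          (fun v hv => Finset.mem_Icc.2 ⟨(hlev v hv).1, (hlev v hv).2⟩)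
      have hni : ∀ k, (s.filter (fun v => lv8 v = k)).card ≤ k + 1 := by
        intro k
        have h := Finset.card_le_card_of_injOn (fun v => v.1.1)
          (s := s.filter (fun v => lv8 v = k)) (t := Finset.range (k + 1))
          (fun v hv => by
            simp only [Finset.mem_coe, Finset.mem_filter] at hv
            simp only [Finset.mem_coe, Finset.mem_range]
            have := hv.2; unfold lv8 at this; omega)
          (fun v hv w hw hvw => by
            simp only [Finset.coe_filter, Set.mem_setOf_eq] at hv hw
            have hvw' : v.1.1 = w.1.1 := hvw
            have h1 := hv.2; have h2 := hw.2
            unfold lv8 at h1 h2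
            exact Prod.ext (Fin.ext hvw') (Fin.ext (by omega)))
        simpa using h
      have hnj : ∀ k, (s.filter (fun v => lv8 v = k)).card ≤ 2 * m - 1 - k := by
        intro k
        have h := Finset.card_le_card_of_injOn (fun v => v.1.1)
          (s := s.filter (fun v => lv8 v = k)) (t := Finset.Icc (k + 1 - m) (m - 1))
          (fun v hv => by
            simp only [Finset.mem_coe, Finset.mem_filter] at hv
            have hb1 := v.1.2; have hb2 := v.2.2
            simp only [Finset.mem_coe, Finset.mem_Icc]
            have := hv.2; unfold lv8 at this; omega)
          (fun v hv w hw hvw => by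
            simp only [Finset.coe_filter, Set.mem_setOf_eq] at hv hw
            have hvw' : v.1.1 = w.1.1 := hvw
            have h1 := hv.2; have h2 := hw.2
            unfold lv8 at h1 h2
            exact Prod.ext (Fin.ext hvw') (Fin.ext (by omega)))
        rw [Nat.card_Icc] at h
        omega
      have hone : ∀ k, i < k → k < j → (s.filter (fun v => lv8 v = k)).card ≤ 1 := by
        intro k hik hkj
        rw [Finset.card_le_one]
        intro u hu v hv
        by_contra huv
        simp only [Finset.mem_filter] at hu hv
        obtain ⟨w, hws, hwk⟩ := hint (k - 1) (by omega) (by omega)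
        obtain ⟨x, hxs, hxk⟩ := hint (k + 1) (by omega) (by omega)
        have a1 : W.Adj ⟨w, hws⟩ ⟨u, hu.1⟩ := Or.inr (show lv8 u = lv8 w + 1 by omega)
        have a2 : W.Adj ⟨u, hu.1⟩ ⟨x, hxs⟩ := Or.inr (show lv8 x = lv8 u + 1 by omega)
        have b1 : W.Adj ⟨w, hws⟩ ⟨v, hv.1⟩ := Or.inr (show lv8 v = lv8 w + 1 by omega)
        have b2 : W.Adj ⟨v, hv.1⟩ ⟨x, hxs⟩ := Or.inr (show lv8 x = lv8 v + 1 by omega)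
        have hne_wu : (⟨w, hws⟩ : (s : Set (Fin m × Fin m))) ≠ ⟨u, hu.1⟩ :=
          ne_of_lv8 (show lv8 w ≠ lv8 u by omega)
        have hne_wx : (⟨w, hws⟩ : (s : Set (Fin m × Fin m))) ≠ ⟨x, hxs⟩ :=
          ne_of_lv8 (show lv8 w ≠ lv8 x by omega)
        have hne_ux : (⟨u, hu.1⟩ : (s : Set (Fin m × Fin m))) ≠ ⟨x, hxs⟩ :=
          ne_of_lv8 (show lv8 u ≠ lv8 x by omega)
        have hne_wv : (⟨w, hws⟩ : (s : Set (Fin m × Fin m))) ≠ ⟨v, hv.1⟩ :=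
          ne_of_lv8 (show lv8 w ≠ lv8 v by omega)
        have hne_vx : (⟨v, hv.1⟩ : (s : Set (Fin m × Fin m))) ≠ ⟨x, hxs⟩ :=
          ne_of_lv8 (show lv8 v ≠ lv8 x by omega)
        have hp1 : (SimpleGraph.Walk.cons a1 (SimpleGraph.Walk.cons a2 SimpleGraph.Walk.nil)).IsPath := by
          rw [SimpleGraph.Walk.isPath_def]
          simp [SimpleGraph.Walk.support_cons, hne_wu, hne_wx, hne_ux]
        have hp2 : (SimpleGraph.Walk.cons b1 (SimpleGraph.Walk.cons b2 SimpleGraph.Walk.nil)).IsPath := by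
          rw [SimpleGraph.Walk.isPath_def]
          simp [SimpleGraph.Walk.support_cons, hne_wv, hne_wx, hne_vx]
        have heqp := hac.path_unique ⟨_, hp1⟩ ⟨_, hp2⟩
        have hsup := congrArg (fun q : W.Path ⟨w, hws⟩ ⟨x, hxs⟩ => q.1.support) heqp
        simp only [SimpleGraph.Walk.support_cons, SimpleGraph.Walk.support_nil,
          List.cons.injEq, and_true, true_and] at hsup
        exact huv (congrArg Subtype.val hsup)
      have hsplit : Finset.Icc i j = insert i (insert j (Finset.Ioo i j)) := by
        ext x
        simp only [Finset.mem_Icc, Finset.mem_insert, Finset.mem_Ioo]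
        omega
      have hIoo : ∑ k ∈ Finset.Ioo i j, (s.filter (fun v => lv8 v = k)).card ≤
          (Finset.Ioo i j).card * 1 := by
        apply Finset.sum_le_card_nsmul
        intro k hk
        exact hone k (Finset.mem_Ioo.1 hk).1 (Finset.mem_Ioo.1 hk).2
      rw [Nat.card_Ioo] at hIoo
      rw [hcardsum, hsplit,
        Finset.sum_insert (by simp only [Finset.mem_insert, Finset.mem_Ioo]; omega),
        Finset.sum_insert (by simp only [Finset.mem_Ioo]; omega)]
      have h1 := hni i
      have h2 := hnj j
      omega
end

section
/- Let G be a graph, v a vertex, and let V_1, …, V_m be the vertex sets of the connected components of G − ({v} ∪ N(v)). Suppose G is triangle-free, and for some index set I and vertices u(i) ∈ N(v), each V_i (i ∈ I) is adjacent to u(i) and to no other vertex of N(v), and T_i is an induced tree in G[{u(i)} ∪ V_i] containing u(i). Then {v} ∪ ⋃_{i ∈ I} T_i induces a tree in G. -/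
open SimpleGraph

private lemma lift_walk_aux {V : Type*} {G : SimpleGraph V} {A B : Set V} :
    ∀ {x y : ↥B} (p : (G.induce B).Walk x y) (hx : (x : V) ∈ A) (hy : (y : V) ∈ A),
      (∀ z ∈ p.support, (z : V) ∈ A) →
      ∃ q : (G.induce A).Walk ⟨x, hx⟩ ⟨y, hy⟩,
        q.support.map Subtype.val = p.support.map Subtype.val ∧
        q.edges.map (Sym2.map Subtype.val) = p.edges.map (Sym2.map Subtype.val)
  | _, _, .nil, hx, hy, _ => ⟨.nil, by simp, by simp⟩
  | x, y, .cons (v := b) h p, hx, hy, hA => by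
    have hb : (b : V) ∈ A := hA b (by simp)
    obtain ⟨q, hs, he⟩ := lift_walk_aux p hb hy (fun z hz => hA z (by simp [hz]))
    have hadj : (G.induce A).Adj ⟨x, hx⟩ ⟨b, hb⟩ := by
      simp only [comap_adj, Function.Embedding.coe_subtype] at h ⊢
      exact h
    exact ⟨.cons hadj q, by simp [hs], by simp [he]⟩

private lemma lift_cycle {V : Type*} {G : SimpleGraph V} {A B : Set V}
    {x : ↥B} (c : (G.induce B).Walk x x) (hc : c.IsCycle) (hx : (x : V) ∈ A)
    (hA : ∀ z ∈ c.support, (z : V) ∈ A) : ¬ (G.induce A).IsAcyclic := by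
  obtain ⟨q, hs, he⟩ := lift_walk_aux c hx hx hA
  intro hacyc
  refine hacyc q ⟨⟨⟨?_⟩, ?_⟩, ?_⟩
  · -- edges nodup
    have : (q.edges.map (Sym2.map Subtype.val)).Nodup := by
      rw [he]; exact hc.edges_nodup.map (Sym2.map.injective Subtype.val_injective)
    exact this.of_map _
  · -- ne nil
    intro hq
    have hlen := congrArg List.length hs
    rw [hq] at hlen
    simp only [Walk.support_nil, List.map_cons, List.map_nil, List.length_cons, List.length_nil,
      List.length_map, Walk.length_support] at hlen
    have h3 := hc.three_le_length
    omega
  · -- support tail nodup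
    have : (q.support.tail.map Subtype.val).Nodup := by
      rw [List.map_tail, hs, ← List.map_tail]
      exact hc.support_nodup.map Subtype.val_injective
    exact this.of_map _

/-- Gluing lemma: in a triangle-free graph `G`, if each component `Vᵢ` of
`G − ({v} ∪ N(v))` (for `i` in the index set) is adjacent to exactly one vertex
`u i ∈ N(v)` and `Tᵢ` is an induced tree in `G[{u i} ∪ Vᵢ]` containing `u i`, then
`{v} ∪ ⋃ᵢ Tᵢ` induces a tree in `G`. -/
theorem stmt_13 {V : Type*} (G : SimpleGraph V) (hfree : G.CliqueFree 3) (v : V)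
    {ι : Type*} (Vs : ι → Set V)
    (hcomp : ∀ i, ∃ c : (G.induce ((insert v (G.neighborSet v))ᶜ)).ConnectedComponent,
      Vs i = Subtype.val '' c.supp)
    (hdisj : Pairwise (Function.onFun Disjoint Vs))
    (u : ι → V) (hu : ∀ i, u i ∈ G.neighborSet v)
    (hadj : ∀ i, ∃ x ∈ Vs i, G.Adj (u i) x)
    (huniq : ∀ i, ∀ w ∈ G.neighborSet v, (∃ x ∈ Vs i, G.Adj w x) → w = u i)
    (Ts : ι → Set V) (hTsub : ∀ i, Ts i ⊆ insert (u i) (Vs i))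
    (huT : ∀ i, u i ∈ Ts i)
    (hTtree : ∀ i, (G.induce (Ts i)).IsTree) :
    (G.induce (insert v (⋃ i, Ts i))).IsTree := by
  classical
  set S : Set V := insert v (⋃ i, Ts i) with hSdef
  have hvS : v ∈ S := Set.mem_insert _ _
  have hTS : ∀ i, Ts i ⊆ S := fun i x hx => Set.mem_insert_iff.2 (Or.inr (Set.mem_iUnion.2 ⟨i, hx⟩))
  have hvu : ∀ i, G.Adj v (u i) := fun i => (G.mem_neighborSet _ _).1 (hu i)
  have hVc : ∀ i, Vs i ⊆ (insert v (G.neighborSet v))ᶜ := by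
    intro i
    obtain ⟨c, hc⟩ := hcomp i
    rw [hc]
    rintro x ⟨x', _, rfl⟩
    exact x'.2
  have hVv : ∀ i x, x ∈ Vs i → x ≠ v := fun i x hx h => hVc i hx (by simp [h])
  have hVN : ∀ i x, x ∈ Vs i → ¬ G.Adj v x := fun i x hx h =>
    hVc i hx (Set.mem_insert_iff.2 (Or.inr h))
  have huvne : ∀ i, u i ≠ v := fun i => ((hvu i).ne).symm
  have htri : ∀ a b, G.Adj v a → G.Adj v b → ¬ G.Adj a b := by
    intro a b h1 h2 h3
    exact hfree {v, a, b} (is3Clique_triple_iff.2 ⟨h1, h2, h3⟩)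
  have hsame : ∀ i j x y, x ∈ Vs i → y ∈ Vs j → G.Adj x y → y ∈ Vs i := by
    intro i j x y hx hy hxy
    obtain ⟨ci, hci⟩ := hcomp i
    obtain ⟨cj, hcj⟩ := hcomp j
    rw [hci] at hx ⊢
    rw [hcj] at hy
    obtain ⟨x', hx', rfl⟩ := hx
    obtain ⟨y', hy', rfl⟩ := hy
    refine ⟨y', ?_, rfl⟩
    have hadj' : (G.induce ((insert v (G.neighborSet v))ᶜ)).Adj x' y' := by
      simp only [comap_adj, Function.Embedding.coe_subtype]
      exact hxy
    rw [ConnectedComponent.mem_supp_iff] at hx' ⊢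
    rw [← hx']
    exact ConnectedComponent.sound hadj'.symm.reachable
  have hVmem : ∀ i j x, x ∈ Vs i → x ∈ Vs j → i = j := by
    intro i j x hxi hxj
    by_contra h
    exact Set.disjoint_left.1 (hdisj h) hxi hxj
  have hVsT : ∀ i x, x ∈ Vs i → x ∈ S → x ∈ Ts i := by
    intro i x hx hxS
    rcases Set.mem_insert_iff.1 hxS with rfl | hxU
    · exact absurd rfl (hVv i _ hx)
    · obtain ⟨k, hk⟩ := Set.mem_iUnion.1 hxU
      rcases Set.mem_insert_iff.1 (hTsub k hk) with rfl | hxk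
      · exact absurd (Set.mem_insert_iff.2 (Or.inr (hu k))) (hVc i hx)
      · obtain rfl := hVmem i k x hx hxk
        exact hk
  have hNu : ∀ x : V, x ∈ S → G.Adj v x → ∃ i, x = u i := by
    intro x hxS hvx
    rcases Set.mem_insert_iff.1 hxS with rfl | hxU
    · exact absurd rfl hvx.ne
    · obtain ⟨k, hk⟩ := Set.mem_iUnion.1 hxU
      rcases Set.mem_insert_iff.1 (hTsub k hk) with h | h
      · exact ⟨k, h⟩
      · exact absurd hvx (hVN k x h)
  have hstep : ∀ i (a b : V), a ∈ Vs i → b ∈ S → G.Adj a b → b = v ∨ b = u i ∨ b ∈ Vs i := by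
    intro i a b ha hbS hab
    rcases Set.mem_insert_iff.1 hbS with rfl | hbU
    · exact Or.inl rfl
    · refine Or.inr ?_
      obtain ⟨k, hk⟩ := Set.mem_iUnion.1 hbU
      rcases Set.mem_insert_iff.1 (hTsub k hk) with rfl | hbk
      · exact Or.inl (huniq i (u k) (hu k) ⟨a, ha, hab.symm⟩)
      · exact Or.inr (hsame i k a b ha hbk hab)
  have hustep : ∀ i (b : V), b ∈ S → G.Adj (u i) b → b = v ∨ ∃ k, u k = u i ∧ b ∈ Vs k := by
    intro i b hbS hib
    rcases Set.mem_insert_iff.1 hbS with rfl | hbU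
    · exact Or.inl rfl
    · refine Or.inr ?_
      obtain ⟨k, hk⟩ := Set.mem_iUnion.1 hbU
      rcases Set.mem_insert_iff.1 (hTsub k hk) with rfl | hbk
      · exact absurd hib (htri _ _ (hvu i) (hvu k))
      · exact ⟨k, (huniq k (u i) (hu i) ⟨b, hbk, hib⟩).symm, hbk⟩
  -- trapping lemma
  have trap : ∀ (i : ι) (x y : ↥S) (p : (G.induce S).Walk x y),
      (x : V) ∈ Vs i →
      (∀ z ∈ p.support, (z : V) ≠ v) → (∀ z ∈ p.support, (z : V) ≠ u i) →
      ∀ z ∈ p.support, (z : V) ∈ Vs i := by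
    intro i x y p
    induction p with
    | nil =>
      intro hx _ _ z hz
      rw [Walk.support_nil, List.mem_singleton] at hz
      subst hz; exact hx
    | @cons a b c hab p ih =>
      intro hx hnv hnu z hz
      have hadj : G.Adj ↑a ↑b := by
        simpa only [comap_adj, Function.Embedding.coe_subtype] using hab
      have hb : (b : V) ∈ Vs i := by
        rcases hstep i ↑a ↑b hx b.2 hadj with h | h | h
        · exact absurd h (hnv b (by simp))
        · exact absurd h (hnu b (by simp))
        · exact h
      rw [Walk.support_cons, List.mem_cons] at hz
      rcases hz with rfl | hz
      · exact hx
      · exact ih hb (fun z hz => hnv z (by simp [hz])) (fun z hz => hnu z (by simp [hz])) z hz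
  -- no nontrivial path between neighbors of v avoiding v
  have lemC : ∀ (a b : ↥S) (q : (G.induce S).Walk a b), q.IsPath →
      (∀ z ∈ q.support, (z : V) ≠ v) → (∃ i, (a : V) = u i) → (∃ j, (b : V) = u j) →
      a = b := by
    intro a b q
    cases q with
    | nil => intro _ _ _ _; rfl
    | @cons _ w _ haw q' =>
      rintro hq hnv ⟨i, hai⟩ ⟨j, hbj⟩
      exfalso
      have hadj : G.Adj (u i) ↑w := by
        rw [← hai]
        simpa only [comap_adj, Function.Embedding.coe_subtype] using haw
      rcases hustep i ↑w w.2 hadj with h | ⟨k, hki, hwk⟩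
      · exact hnv w (by simp) h
      · rw [Walk.cons_isPath_iff] at hq
        by_cases hexu : ∃ z ∈ q'.support, (z : V) = u k
        · obtain ⟨z, hz, hzu⟩ := hexu
          have hza : z = a := Subtype.ext (by rw [hzu, hki, ← hai])
          exact hq.2 (hza ▸ hz)
        · push_neg at hexu
          have hall := trap k w b q' hwk (fun z hz => hnv z (by simp [hz])) hexu
          have hbv : (b : V) ∈ Vs k := hall b q'.end_mem_support
          exact hVN k _ hbv (hbj ▸ hvu j)
  refine ⟨?_, ?_⟩
  · -- connectivity
    rw [connected_iff]
    refine ⟨?_, ⟨⟨v, hvS⟩⟩⟩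
    have hbase : ∀ x : ↥S, (G.induce S).Reachable x ⟨v, hvS⟩ := by
      intro x
      rcases Set.mem_insert_iff.1 x.2 with hx | hxU
      · rw [show x = ⟨v, hvS⟩ from Subtype.ext hx]
      · obtain ⟨i, hi⟩ := Set.mem_iUnion.1 hxU
        let φ : G.induce (Ts i) →g G.induce S := induceHom Hom.id (fun a ha => hTS i ha)
        have h1 := ((hTtree i).isConnected.preconnected ⟨↑x, hi⟩ ⟨u i, huT i⟩).map φ
        have e1 : φ ⟨↑x, hi⟩ = x := Subtype.ext (by simp [φ]; rfl)
        have e2 : φ ⟨u i, huT i⟩ = ⟨u i, hTS i (huT i)⟩ := Subtype.ext (by simp [φ]; rfl)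
        rw [e1, e2] at h1
        refine h1.trans (Adj.reachable ?_)
        simp only [comap_adj, Function.Embedding.coe_subtype]
        exact (hvu i).symm
    intro x y
    exact (hbase x).trans (hbase y).symm
  · -- acyclicity
    intro x c hc
    by_cases hvsup : (⟨v, hvS⟩ : ↥S) ∈ c.support
    · have key : ∀ (c0 : (G.induce S).Walk ⟨v, hvS⟩ ⟨v, hvS⟩), c0.IsCycle → False := by
        intro c0 hc0
        cases c0 with
        | nil => exact hc0.ne_nil rfl
        | @cons _ w _ hvw p =>
          rw [Walk.cons_isCycle_iff] at hc0
          obtain ⟨hp, hep⟩ := hc0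
          have hvw' : G.Adj v ↑w := by
            simpa only [comap_adj, Function.Embedding.coe_subtype] using hvw
          obtain ⟨i, hwi⟩ := hNu ↑w w.2 hvw'
          have key2 : ∀ (q : (G.induce S).Walk ⟨v, hvS⟩ w), q.IsPath →
              s(⟨v, hvS⟩, w) ∉ q.edges → False := by
            intro q hq hqe
            cases q with
            | nil => exact huvne i hwi.symm
            | @cons _ w2 _ hvw2 r =>
              rw [Walk.cons_isPath_iff] at hq
              have hvw2' : G.Adj v ↑w2 := by
                simpa only [comap_adj, Function.Embedding.coe_subtype] using hvw2
              obtain ⟨j, hw2j⟩ := hNu ↑w2 w2.2 hvw2'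
              have hnvr : ∀ z ∈ r.support, (z : V) ≠ v := by
                intro z hz hzv
                exact hq.2 ((Subtype.ext hzv : z = ⟨v, hvS⟩) ▸ hz)
              have hw2w := lemC w2 w r hq.1 hnvr ⟨j, hw2j⟩ ⟨i, hwi⟩
              subst hw2w
              exact hqe (by rw [Walk.edges_cons]; exact List.mem_cons_self)
          apply key2 p.reverse hp.reverse
          rw [Walk.edges_reverse, List.mem_reverse]
          exact hep
      exact key (c.rotate _ hvsup) (hc.rotate hvsup)
    · have hnv : ∀ z ∈ c.support, (z : V) ≠ v := by
        intro z hz hzv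
        exact hvsup ((Subtype.ext hzv : z = ⟨v, hvS⟩) ▸ hz)
      by_cases hexu : ∃ z ∈ c.support, ∃ k, (z : V) = u k
      · obtain ⟨z, hzsup, k, hzk⟩ := hexu
        have hrotsub : ∀ y ∈ (c.rotate _ hzsup).support, y ∈ c.support := by
          intro y hy
          rw [Walk.rotate, Walk.mem_support_append_iff] at hy
          rcases hy with hy | hy
          · exact Walk.support_dropUntil_subset _ _ hy
          · exact Walk.support_takeUntil_subset _ _ hy
        have key3 : ∀ (c0 : (G.induce S).Walk z z), c0.IsCycle →
            (∀ y ∈ c0.support, (y : V) ≠ v) → False := by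
          intro c0 hc0 hnv0
          cases c0 with
          | nil => exact hc0.ne_nil rfl
          | @cons _ w _ hzw p =>
            rw [Walk.cons_isCycle_iff] at hc0
            obtain ⟨hp, hep⟩ := hc0
            have hzw' : G.Adj (u k) ↑w := by
              rw [← hzk]
              simpa only [comap_adj, Function.Embedding.coe_subtype] using hzw
            rcases hustep k ↑w w.2 hzw' with h | ⟨m, hmk, hwm⟩
            · exact hnv0 w (by simp) h
            · have key4 : ∀ (q : (G.induce S).Walk z w), q.IsPath →
                  (∀ y ∈ q.support, (y : V) ≠ v) →
                  ∃ m', u m' = u k ∧ ∀ y ∈ q.support.tail, (y : V) ∈ Vs m' := by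
                intro q hq hnvq
                cases q with
                | nil => exact absurd (hzk ▸ hvu k) (hVN m _ hwm)
                | @cons _ w2 _ hzw2 r =>
                  have hzw2' : G.Adj (u k) ↑w2 := by
                    rw [← hzk]
                    simpa only [comap_adj, Function.Embedding.coe_subtype] using hzw2
                  rcases hustep k ↑w2 w2.2 hzw2' with h | ⟨m2, hm2, hw2⟩
                  · exact absurd h (hnvq w2 (by simp))
                  · rw [Walk.cons_isPath_iff] at hq
                    have hnur : ∀ y ∈ r.support, (y : V) ≠ u m2 := by
                      intro y hy hyu
                      have hyz : y = z := Subtype.ext (by rw [hyu, hm2, ← hzk])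
                      exact hq.2 (hyz ▸ hy)
                    have hall := trap m2 w2 w r hw2
                      (fun y hy => hnvq y (by simp [hy])) hnur
                    refine ⟨m2, hm2, ?_⟩
                    intro y hy
                    rw [Walk.support_cons, List.tail_cons] at hy
                    exact hall y hy
              obtain ⟨m', hm', hallm⟩ := key4 p.reverse hp.reverse
                (fun y hy => hnv0 y
                  (by rw [Walk.support_reverse, List.mem_reverse] at hy; simp [hy]))
              have hTm : ∀ y ∈ (Walk.cons hzw p).support, (y : V) ∈ Ts m' := by
                intro y hy
                rw [Walk.support_cons, List.mem_cons] at hy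
                rcases hy with rfl | hy
                · rw [hzk, ← hm']; exact huT m'
                · have hyrev : y ∈ p.reverse.support := by
                    rw [Walk.support_reverse, List.mem_reverse]; exact hy
                  rw [Walk.support_eq_cons p.reverse, List.mem_cons] at hyrev
                  rcases hyrev with rfl | hyrev
                  · rw [hzk, ← hm']; exact huT m'
                  · exact hVsT m' _ (hallm y hyrev) y.2
              exact lift_cycle (Walk.cons hzw p)
                (by rw [Walk.cons_isCycle_iff]; exact ⟨hp, hep⟩)
                (hTm z (by simp)) hTm ((hTtree m').IsAcyclic)
        exact key3 (c.rotate _ hzsup) (hc.rotate hzsup) (fun y hy => hnv y (hrotsub y hy))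
      · push_neg at hexu
        rcases Set.mem_insert_iff.1 x.2 with hxv | hxU
        · exact hnv x c.start_mem_support hxv
        · obtain ⟨i, hi⟩ := Set.mem_iUnion.1 hxU
          rcases Set.mem_insert_iff.1 (hTsub i hi) with hxu | hxv
          · exact hexu x c.start_mem_support i hxu
          · have hall := trap i x x c hxv hnv (fun z hz hzu => hexu z hz i hzu)
            have hTm : ∀ y ∈ c.support, (y : V) ∈ Ts i := fun y hy =>
              hVsT i _ (hall y hy) y.2
            exact lift_cycle c hc (hTm x c.start_mem_support) hTm ((hTtree i).IsAcyclic)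
end

section
/- For every sufficiently large n there exists a connected triangle-free (indeed bipartite) graph G on n vertices and a vertex v of G such that every induced tree containing v has at most (1+o(1))√(2n) vertices. -/
namespace Stmt14

open Finset SimpleGraph

/-- Cumulative layer sizes: layer `0` has size `1`, and for `k ≥ 1` layer `k` has
size `max (m - k) 1`. -/
def csum (m k : ℕ) : ℕ := 1 + ∑ i ∈ Finset.range k, max (m - 1 - i) 1

lemma csum_zero (m : ℕ) : csum m 0 = 1 := by simp [csum]

lemma csum_succ (m k : ℕ) : csum m (k + 1) = csum m k + max (m - 1 - k) 1 := by
  simp [csum, Finset.sum_range_succ]; ring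

lemma csum_lt_succ (m k : ℕ) : csum m k < csum m (k + 1) := by
  rw [csum_succ]
  have := le_max_right (m - 1 - k) 1
  omega

lemma csum_strictMono (m : ℕ) : StrictMono (csum m) :=
  strictMono_nat_of_lt_succ (csum_lt_succ m)

lemma one_le_csum (m k : ℕ) : 1 ≤ csum m k := by
  simp [csum]

lemma lt_csum_self (m j : ℕ) : j < csum m (j + 1) := by
  have h : ∀ k, k + 1 ≤ csum m k := by
    intro k
    induction k with
    | zero => simp [csum_zero]
    | succ k ih => have := csum_lt_succ m k; omega
  have := h (j + 1); omega

/-- The layer of vertex `j`: the least `k` with `j < csum m k`. -/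
def lay (m j : ℕ) : ℕ := Nat.find (⟨j + 1, lt_csum_self m j⟩ : ∃ k, j < csum m k)

lemma lay_spec (m j : ℕ) : j < csum m (lay m j) :=
  Nat.find_spec (⟨j + 1, lt_csum_self m j⟩ : ∃ k, j < csum m k)

lemma csum_le_of_lt_lay (m j : ℕ) {k : ℕ} (hk : k < lay m j) : csum m k ≤ j := by
  have := Nat.find_min (⟨j + 1, lt_csum_self m j⟩ : ∃ k, j < csum m k) hk
  omega

lemma lay_le_of_lt (m j k : ℕ) (h : j < csum m k) : lay m j ≤ k :=
  Nat.find_le h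

lemma lay_eq_zero_iff (m j : ℕ) : lay m j = 0 ↔ j = 0 := by
  constructor
  · intro h
    have := lay_spec m j
    rw [h, csum_zero] at this
    omega
  · intro h
    subst h
    have : lay m 0 ≤ 0 := lay_le_of_lt m 0 0 (by rw [csum_zero]; omega)
    omega

lemma lay_csum_sub_one (m k : ℕ) : lay m (csum m k - 1) = k := by
  have h1 : csum m k - 1 < csum m k := by have := one_le_csum m k; omega
  have h2 : lay m (csum m k - 1) ≤ k := lay_le_of_lt _ _ _ h1
  rcases Nat.lt_or_ge (lay m (csum m k - 1)) k with h | h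
  · exfalso
    have h3 := csum_le_of_lt_lay m (csum m k - 1) (k := lay m (csum m k - 1))
    have h4 : csum m (lay m (csum m k - 1)) < csum m k := csum_strictMono m h
    have h5 := lay_spec m (csum m k - 1)
    omega
  · omega

/-- The layered graph on `Fin n`: two vertices are adjacent iff their layers differ
by exactly one. -/
def graph (n m : ℕ) : SimpleGraph (Fin n) where
  Adj x y := lay m x.val = lay m y.val + 1 ∨ lay m y.val = lay m x.val + 1
  symm := ⟨by intro x y h; tauto⟩
  loopless := ⟨by intro x h; omega⟩

lemma graph_adj (n m : ℕ) (x y : Fin n) :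
    (graph n m).Adj x y ↔
      (lay m x.val = lay m y.val + 1 ∨ lay m y.val = lay m x.val + 1) := Iff.rfl

lemma graph_connected (n m : ℕ) (hn : 0 < n) : (graph n m).Connected := by
  have key : ∀ (k : ℕ) (x : Fin n), lay m x.val = k →
      (graph n m).Reachable x ⟨0, hn⟩ := by
    intro k
    induction k with
    | zero =>
      intro x hx
      have hx0 : x.val = 0 := (lay_eq_zero_iff m x.val).mp hx
      have : x = ⟨0, hn⟩ := Fin.ext hx0
      rw [this]
    | succ k ih =>
      intro x hx
      have hcs : csum m k ≤ x.val := csum_le_of_lt_lay m x.val (by omega)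
      have hy : csum m k - 1 < n := by
        have := x.isLt; have := one_le_csum m k; omega
      have hyl : lay m ((⟨csum m k - 1, hy⟩ : Fin n)).val = k := lay_csum_sub_one m k
      have adj : (graph n m).Adj x ⟨csum m k - 1, hy⟩ := Or.inl (by rw [hyl, hx])
      exact adj.reachable.trans (ih _ hyl)
  rw [SimpleGraph.connected_iff]
  refine ⟨fun x y => (key _ x rfl).trans (key _ y rfl).symm, ⟨⟨0, hn⟩⟩⟩

lemma graph_colorable (n m : ℕ) : (graph n m).Colorable 2 := by
  have C : (graph n m).Coloring (Fin 2) :=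
    SimpleGraph.Coloring.mk (fun x => ⟨lay m x.val % 2, by omega⟩)
      (by
        intro a b hab
        rcases hab with h | h <;>
          · simp only [ne_eq, Fin.mk.injEq]
            omega)
  simpa using C.colorable

/-- Intermediate value property for layers along a walk in the induced graph. -/
lemma exists_layer_on_walk {n m : ℕ} {s : Finset (Fin n)} (k : ℕ)
    {x y : ↥((s : Set (Fin n)))} (w : ((graph n m).induce (s : Set (Fin n))).Walk x y) :
      lay m (x : Fin n).val ≤ k → k ≤ lay m (y : Fin n).val →
      ∃ z ∈ w.support, lay m ((z : Fin n)).val = k := by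
  induction w with
  | nil =>
    intro h1 h2
    exact ⟨_, SimpleGraph.Walk.start_mem_support _, by omega⟩
  | @cons a b c h p ih =>
    intro h1 h2
    by_cases hk : lay m (a : Fin n).val = k
    · exact ⟨a, SimpleGraph.Walk.start_mem_support _, hk⟩
    · have hadj : lay m (a : Fin n).val = lay m (b : Fin n).val + 1 ∨
          lay m (b : Fin n).val = lay m (a : Fin n).val + 1 := h
      have hb : lay m (b : Fin n).val ≤ k := by omega
      obtain ⟨z, hz, hzk⟩ := ih hb h2
      exact ⟨z, by simp [hz], hzk⟩

lemma tree_card_le {n m : ℕ} (hm : 1 ≤ m) (hn : 0 < n)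
    (hnm : n ≤ csum m (m - 1)) (s : Finset (Fin n))
    (hv : (⟨0, hn⟩ : Fin n) ∈ s)
    (ht : ((graph n m).induce (s : Set (Fin n))).IsTree) : s.card ≤ m := by
  classical
  set f : Fin n → ℕ := fun x => lay m x.val with hf
  have hsne : s.Nonempty := ⟨_, hv⟩
  set K : ℕ := s.sup f with hK
  obtain ⟨w, hw, hwK⟩ : ∃ w ∈ s, f w = K := by
    obtain ⟨w, hw, hw2⟩ := Finset.exists_mem_eq_sup s hsne f
    exact ⟨w, hw, hw2.symm⟩
  have hwK' : lay m w.val = K := hwK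
  have hKle : K ≤ m - 1 := by
    rw [← hwK']
    exact lay_le_of_lt m w.val (m - 1) (lt_of_lt_of_le w.isLt hnm)
  -- every layer strictly below K contains at most one vertex of s
  have hfiber_lt : ∀ k < K, (s.filter fun x => f x = k).card ≤ 1 := by
    intro k hk
    by_contra hcon
    push_neg at hcon
    obtain ⟨a, ha, b, hb, hab⟩ := Finset.one_lt_card.mp hcon
    simp only [Finset.mem_filter] at ha hb
    have ha2 : lay m a.val = k := ha.2
    have hb2 : lay m b.val = k := hb.2
    rcases Nat.eq_zero_or_pos k with hk0 | hkpos
    · have ha0 : a.val = 0 := (lay_eq_zero_iff m a.val).mp (by omega)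
      have hb0 : b.val = 0 := (lay_eq_zero_iff m b.val).mp (by omega)
      exact hab (Fin.ext (by omega))
    · -- k ≥ 1 : find vertices in layers k+1 and k-1 and build two distinct paths
      have hvs : ((⟨0, hn⟩ : Fin n)) ∈ (s : Set (Fin n)) := by simpa using hv
      have hws : w ∈ (s : Set (Fin n)) := by simpa using hw
      have has : a ∈ (s : Set (Fin n)) := by simpa using ha.1
      have hbs : b ∈ (s : Set (Fin n)) := by simpa using hb.1
      have h0 : lay m ((⟨(⟨0, hn⟩ : Fin n), hvs⟩ :
          ↥((s : Set (Fin n)))) : Fin n).val = 0 := (lay_eq_zero_iff m 0).mpr rfl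
      obtain ⟨wk⟩ := ht.isConnected ⟨⟨0, hn⟩, hvs⟩ ⟨w, hws⟩
      obtain ⟨c, _, hc⟩ := exists_layer_on_walk (k + 1) wk (by omega) (by show k + 1 ≤ lay m w.val; omega)
      obtain ⟨d, _, hd⟩ := exists_layer_on_walk (k - 1) wk (by omega) (by show k - 1 ≤ lay m w.val; omega)
      have hcd : c ≠ d := by
        intro h
        rw [h] at hc
        omega
      have hAB : (⟨a, has⟩ : ↥((s : Set (Fin n)))) ≠ ⟨b, hbs⟩ := by
        intro h
        exact hab (by simpa [Subtype.ext_iff] using h)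
      have adjAC : ((graph n m).induce (s : Set (Fin n))).Adj ⟨a, has⟩ c :=
        Or.inr (by show lay m (c : Fin n).val = lay m a.val + 1; omega)
      have adjCB : ((graph n m).induce (s : Set (Fin n))).Adj c ⟨b, hbs⟩ :=
        Or.inl (by show lay m (c : Fin n).val = lay m b.val + 1; omega)
      have adjAD : ((graph n m).induce (s : Set (Fin n))).Adj ⟨a, has⟩ d :=
        Or.inl (by show lay m a.val = lay m (d : Fin n).val + 1; omega)
      have adjDB : ((graph n m).induce (s : Set (Fin n))).Adj d ⟨b, hbs⟩ :=
        Or.inr (by show lay m b.val = lay m (d : Fin n).val + 1; omega)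
      have hAC : (⟨a, has⟩ : ↥((s : Set (Fin n)))) ≠ c := fun h => by
        rw [← h] at adjAC; exact ((graph n m).induce _).loopless.irrefl _ adjAC
      have hCB : c ≠ (⟨b, hbs⟩ : ↥((s : Set (Fin n)))) := fun h => by
        rw [h] at adjCB; exact ((graph n m).induce _).loopless.irrefl _ adjCB
      have hAD : (⟨a, has⟩ : ↥((s : Set (Fin n)))) ≠ d := fun h => by
        rw [← h] at adjAD; exact ((graph n m).induce _).loopless.irrefl _ adjAD
      have hDB : d ≠ (⟨b, hbs⟩ : ↥((s : Set (Fin n)))) := fun h => by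
        rw [h] at adjDB; exact ((graph n m).induce _).loopless.irrefl _ adjDB
      set p : ((graph n m).induce (s : Set (Fin n))).Walk ⟨a, has⟩ ⟨b, hbs⟩ :=
        SimpleGraph.Walk.cons adjAC (SimpleGraph.Walk.cons adjCB SimpleGraph.Walk.nil) with hp
      set q : ((graph n m).induce (s : Set (Fin n))).Walk ⟨a, has⟩ ⟨b, hbs⟩ :=
        SimpleGraph.Walk.cons adjAD (SimpleGraph.Walk.cons adjDB SimpleGraph.Walk.nil) with hq
      have hpp : p.IsPath := by
        rw [hp, SimpleGraph.Walk.isPath_def]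
        simp [hAC, hAB, hCB]
      have hqp : q.IsPath := by
        rw [hq, SimpleGraph.Walk.isPath_def]
        simp [hAD, hAB, hDB]
      have huniq := (SimpleGraph.isAcyclic_iff_path_unique.mp ht.IsAcyclic)
        ⟨p, hpp⟩ ⟨q, hqp⟩
      have hpq : p = q := Subtype.mk_eq_mk.mp huniq
      rw [hp, hq] at hpq
      have hsup := congrArg SimpleGraph.Walk.support hpq
      simp only [SimpleGraph.Walk.support_cons, SimpleGraph.Walk.support_nil,
        List.cons.injEq, and_true, true_and] at hsup
      exact hcd hsup
  -- the top layer contains at most `max (m - K) 1` vertices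
  have hfiber_top : (s.filter fun x => f x = K).card ≤ max (m - K) 1 := by
    rcases Nat.eq_zero_or_pos K with hK0 | hKpos
    · have : (s.filter fun x => f x = K).card ≤ 1 := by
        apply Finset.card_le_one.mpr
        intro a ha b hb
        simp only [Finset.mem_filter] at ha hb
        have ha0 : a.val = 0 := (lay_eq_zero_iff m a.val).mp (by rw [← hK0]; exact ha.2)
        have hb0 : b.val = 0 := (lay_eq_zero_iff m b.val).mp (by rw [← hK0]; exact hb.2)
        exact Fin.ext (by omega)
      omega
    · have hsubset : (s.filter fun x => f x = K).card ≤
          (Finset.Ico (csum m (K - 1)) (csum m K)).card := by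
        apply Finset.card_le_card_of_injOn Fin.val
        · intro x hx
          simp only [Finset.mem_coe, Finset.coe_filter, Set.mem_setOf_eq, Finset.mem_filter] at hx
          have hx2 : lay m x.val = K := hx.2
          have hlow : csum m (K - 1) ≤ x.val := csum_le_of_lt_lay m x.val (by omega)
          have hhigh : x.val < csum m K := by
            have := lay_spec m x.val; rwa [hx2] at this
          exact Finset.mem_Ico.mpr ⟨hlow, hhigh⟩
        · intro x _ y _ hxy
          exact Fin.ext hxy
      have hIco : (Finset.Ico (csum m (K - 1)) (csum m K)).card
          = csum m K - csum m (K - 1) := Nat.card_Ico _ _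
      have hstep : csum m K = csum m (K - 1) + max (m - 1 - (K - 1)) 1 := by
        have hKK : K - 1 + 1 = K := by omega
        have := csum_succ m (K - 1)
        rw [hKK] at this
        exact this
      have : max (m - 1 - (K - 1)) 1 = max (m - K) 1 := by omega
      omega
  have hcard : s.card = ∑ k ∈ Finset.range (K + 1), (s.filter fun x => f x = k).card :=
    Finset.card_eq_sum_card_fiberwise (fun x hx => Finset.mem_range.mpr
      (Nat.lt_succ_of_le (Finset.le_sup hx)))
  rw [hcard, Finset.sum_range_succ]
  have h1 : ∑ k ∈ Finset.range K, (s.filter fun x => f x = k).card ≤ K := by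
    calc ∑ k ∈ Finset.range K, (s.filter fun x => f x = k).card
        ≤ ∑ _k ∈ Finset.range K, 1 :=
          Finset.sum_le_sum (fun k hk => hfiber_lt k (Finset.mem_range.mp hk))
      _ = K := by simp
  omega

lemma sum_aux (M : ℕ) :
    ∑ i ∈ Finset.range (M + 1), (M + 1 - i) = ∑ i ∈ Finset.range (M + 1), (i + 1) :=
  calc ∑ i ∈ Finset.range (M + 1), (M + 1 - i)
      = ∑ i ∈ Finset.range (M + 1), ((M + 1) - 1 - i + 1) := by
        refine Finset.sum_congr rfl (fun i hi => ?_)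
        have : i < M + 1 := Finset.mem_range.mp hi
        omega
    _ = ∑ i ∈ Finset.range (M + 1), (i + 1) :=
        Finset.sum_range_reflect (fun i => i + 1) (M + 1)

lemma csum_top (M : ℕ) :
    2 * csum (M + 2) (M + 1) = 2 + (M + 1) * M + 2 * (M + 1) := by
  have h1 : csum (M + 2) (M + 1) = 1 + ∑ i ∈ Finset.range (M + 1), (M + 1 - i) := by
    unfold csum
    congr 1
    refine Finset.sum_congr rfl (fun i hi => ?_)
    have : i < M + 1 := Finset.mem_range.mp hi
    omega
  have h2 := sum_aux M
  have h3 : ∑ i ∈ Finset.range (M + 1), (i + 1)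
      = (∑ i ∈ Finset.range (M + 1), i) + (M + 1) := by
    rw [Finset.sum_add_distrib]
    simp
  have h4 : (∑ i ∈ Finset.range (M + 1), i) * 2 = (M + 1) * M :=
    Finset.sum_range_id_mul_two (M + 1)
  rw [h1, h2, h3]
  omega

lemma n_le_csum (n : ℕ) :
    n ≤ csum (Nat.sqrt (2 * n) + 2) (Nat.sqrt (2 * n) + 1) := by
  set s := Nat.sqrt (2 * n) with hs
  have h1 : 2 * n < (s + 1) * (s + 1) := Nat.lt_succ_sqrt (2 * n)
  have h2 := csum_top s
  nlinarith [h1, h2]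

end Stmt14

/-- For every sufficiently large `n` there is a connected bipartite (hence
triangle-free) graph `G` on `n` vertices and a vertex `v` such that every induced
tree containing `v` has at most `(1+o(1))√(2n)` vertices. -/
theorem stmt_14 :
    ∀ ε > (0 : ℝ), ∃ N : ℕ, ∀ n : ℕ, N ≤ n →
      ∃ (V : Type) (_ : Fintype V) (G : SimpleGraph V) (v : V),
        Fintype.card V = n ∧ G.Connected ∧ G.Colorable 2 ∧
        ∀ s : Finset V, v ∈ s → (G.induce (s : Set V)).IsTree →
          (s.card : ℝ) ≤ (1 + ε) * Real.sqrt (2 * n) := by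
  intro ε hε
  refine ⟨max 1 ⌈(2 / ε) ^ 2⌉₊, fun n hn => ?_⟩
  have hn1 : 1 ≤ n := le_trans (le_max_left _ _) hn
  set m : ℕ := Nat.sqrt (2 * n) + 2 with hm
  refine ⟨Fin n, inferInstance, Stmt14.graph n m, ⟨0, hn1⟩, Fintype.card_fin n,
    Stmt14.graph_connected n m hn1, Stmt14.graph_colorable n m, ?_⟩
  intro s hv ht
  have hnm : n ≤ Stmt14.csum m (m - 1) := by
    have := Stmt14.n_le_csum n
    have hm1 : m - 1 = Nat.sqrt (2 * n) + 1 := by omega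
    rw [hm1]
    exact this
  have hcard : s.card ≤ m := Stmt14.tree_card_le (by omega) hn1 hnm s hv ht
  -- now the real-number estimate
  have hsq : ((Nat.sqrt (2 * n) : ℝ)) ≤ Real.sqrt (2 * n) := by
    apply Real.le_sqrt_of_sq_le
    have h := Nat.sqrt_le' (2 * n)
    have : ((Nat.sqrt (2 * n) ^ 2 : ℕ) : ℝ) ≤ ((2 * n : ℕ) : ℝ) := Nat.cast_le.mpr h
    push_cast at this ⊢
    linarith
  have hNge : ((2 / ε) ^ 2 : ℝ) ≤ (n : ℝ) := by
    have h1 : (⌈(2 / ε) ^ 2⌉₊ : ℝ) ≤ n := Nat.cast_le.mpr (le_trans (le_max_right _ _) hn)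
    exact le_trans (Nat.le_ceil _) h1
  have heps : 2 ≤ ε * Real.sqrt (2 * n) := by
    have h2 : (2 / ε) ≤ Real.sqrt (2 * n) := by
      apply Real.le_sqrt_of_sq_le
      have : (0 : ℝ) ≤ n := Nat.cast_nonneg n
      linarith
    have h3 : ε * (2 / ε) ≤ ε * Real.sqrt (2 * n) :=
      mul_le_mul_of_nonneg_left h2 (le_of_lt hε)
    have h4 : ε * (2 / ε) = 2 := by field_simp
    linarith
  have hcardR : (s.card : ℝ) ≤ (Nat.sqrt (2 * n) : ℝ) + 2 := by
    have : (s.card : ℝ) ≤ (m : ℝ) := Nat.cast_le.mpr hcard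
    rw [hm] at this
    push_cast at this
    linarith
  have hfin : ((Nat.sqrt (2 * n) : ℝ)) + 2 ≤ (1 + ε) * Real.sqrt (2 * n) := by
    have h5 : (0 : ℝ) ≤ Real.sqrt (2 * n) := Real.sqrt_nonneg _
    nlinarith [hsq, heps]
  have : Real.sqrt ((2 * n : ℕ) : ℝ) = Real.sqrt (2 * (n : ℝ)) := by push_cast; ring_nf
  calc (s.card : ℝ) ≤ (Nat.sqrt (2 * n) : ℝ) + 2 := hcardR
    _ ≤ (1 + ε) * Real.sqrt (2 * n) := hfin
end

section
/- Let G be a connected K_r-free graph on n+1 vertices (r ≥ 4, n ≥ 2) in which the vertex v has degree less than n^{1/4} and every neighbor of v has fewer than n^{1/4} neighbors outside {v} ∪ N(v). If every connected component of G − ({v} ∪ N(v)) has size at most n/r⁴, then more than r² of these components have size at least √n/r². -/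
lemma walk_exit {V : Type*} (G : SimpleGraph V) (s : Set V) :
    ∀ {a b : V} (_ : G.Walk a b) (ha : a ∈ sᶜ) (_ : b ∈ s),
    ∃ (x : ↥sᶜ) (y : V), y ∈ s ∧ G.Adj x.val y ∧
      (G.induce sᶜ).Reachable ⟨a, ha⟩ x
  | a, _, .nil, ha, hb => absurd hb ha
  | a, b, .cons (v := a') hadj p', ha, hb => by
    by_cases ha' : a' ∈ s
    · exact ⟨⟨a, ha⟩, a', ha', hadj, SimpleGraph.Reachable.refl _⟩
    · obtain ⟨x, y, hy, hxy, hre⟩ := walk_exit G s p' ha' hb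
      refine ⟨x, y, hy, hxy, SimpleGraph.Reachable.trans ?_ hre⟩
      exact SimpleGraph.Adj.reachable
        (show (G.induce sᶜ).Adj ⟨a, ha⟩ ⟨a', ha'⟩ from hadj)

lemma sum_supp_ncard {W : Type*} [Fintype W] (H : SimpleGraph W)
    [Fintype H.ConnectedComponent] :
    ∑ c : H.ConnectedComponent, c.supp.ncard = Fintype.card W := by
  classical
  rw [Fintype.card, Finset.card_eq_sum_card_fiberwise
    (f := H.connectedComponentMk) (fun w _ => Finset.mem_univ _)]
  apply Finset.sum_congr rfl
  intro c _
  rw [Set.ncard_eq_toFinset_card']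
  congr 1
  ext w
  simp [SimpleGraph.ConnectedComponent.mem_supp_iff]

lemma aux_arith (R q s N d M K : ℝ) (hR : 4 ≤ R) (hn2 : 2 ≤ N)
    (hq2 : q*q = s) (hs2 : s*s = N) (hqpos : 0 < q) (hnpos : 0 < N)
    (hdq : d < q) (hMB : M ≤ d*q)
    (hsplit : N - d ≤ K*(N/R^4) + M*(s/R^2)) : R^2 < K := by
  have hRpos : (0 : ℝ) < R := by linarith
  have hR2 : (16 : ℝ) ≤ R ^ 2 := by nlinarith
  have hspos : (0 : ℝ) < s := by rw [← hq2]; positivity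
  have hs1 : (1 : ℝ) ≤ s := by nlinarith
  have hq1 : (1 : ℝ) ≤ q := by nlinarith
  have hqs : q ≤ s := by nlinarith
  have hs78 : s ≤ 7 / 8 * N := by nlinarith
  have hsr : (0 : ℝ) < s / R ^ 2 := by positivity
  have hMs : M * (s / R ^ 2) < N / R ^ 2 := by
    have e1 : M * (s / R ^ 2) ≤ (d * q) * (s / R ^ 2) :=
      mul_le_mul_of_nonneg_right hMB hsr.le
    have e2 : (d * q) * (s / R ^ 2) < (q * q) * (s / R ^ 2) :=
      mul_lt_mul_of_pos_right (mul_lt_mul_of_pos_right hdq hqpos) hsr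
    have e3 : (q * q) * (s / R ^ 2) = N / R ^ 2 := by
      rw [hq2, ← mul_div_assoc, hs2]
    linarith
  have hnR2 : N / R ^ 2 ≤ N / 16 := by
    apply div_le_div_of_nonneg_left hnpos.le (by norm_num) hR2
  have hRN : R ^ 2 * (N / R ^ 4) = N / R ^ 2 := by
    field_simp
  have key : R ^ 2 * (N / R ^ 4) < K * (N / R ^ 4) := by
    have hds : d < s := lt_of_lt_of_le hdq hqs
    linarith
  exact lt_of_mul_lt_mul_right key (by positivity)

/-- Counting lemma: in a connected `Kᵣ`-free graph on `n+1` vertices (`r ≥ 4`,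
`n ≥ 2`), if `v` has degree `< n^{1/4}`, every neighbor of `v` has fewer than
`n^{1/4}` neighbors outside `{v} ∪ N(v)`, and every connected component of
`G − ({v} ∪ N(v))` has size at most `n/r⁴`, then more than `r²` components have
size at least `√n/r²`. -/
theorem stmt_18 {V : Type*} [Fintype V] [DecidableEq V] (G : SimpleGraph V)
    [DecidableRel G.Adj] (r n : ℕ) (hr : 4 ≤ r) (hn : 2 ≤ n)
    (hcard : Fintype.card V = n + 1) (hconn : G.Connected) (hfree : G.CliqueFree r)
    (v : V) (hdegv : (G.degree v : ℝ) < (n : ℝ) ^ ((1 : ℝ) / 4))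
    (hdegu : ∀ u ∈ G.neighborFinset v,
      (((G.neighborFinset u) \ (insert v (G.neighborFinset v))).card : ℝ) <
        (n : ℝ) ^ ((1 : ℝ) / 4))
    (hsmall : ∀ c : (G.induce ((insert v (G.neighborSet v))ᶜ)).ConnectedComponent,
      (c.supp.ncard : ℝ) ≤ (n : ℝ) / (r : ℝ) ^ 4) :
    (r : ℝ) ^ 2 <
      (Set.ncard {c : (G.induce ((insert v (G.neighborSet v))ᶜ)).ConnectedComponent |
        Real.sqrt n / (r : ℝ) ^ 2 ≤ (c.supp.ncard : ℝ)} : ℝ) := by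
  classical
  set S : Set V := insert v (G.neighborSet v) with hSdef
  have instF : Fintype (G.induce Sᶜ).ConnectedComponent := Fintype.ofFinite _
  set d : ℕ := G.degree v with hddef
  set B : Finset V := (G.neighborFinset v).biUnion
    (fun u => G.neighborFinset u \ insert v (G.neighborFinset v)) with hBdef
  -- every component has a chosen vertex in B
  have hbd : ∀ c : (G.induce Sᶜ).ConnectedComponent,
      ∃ p : V, p ∈ B ∧ ∃ hp : p ∈ Sᶜ,
        (G.induce Sᶜ).connectedComponentMk ⟨p, hp⟩ = c := by
    intro c
    obtain ⟨w, hw⟩ := c.exists_rep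
    obtain ⟨x, y, hy, hxy, hre⟩ := walk_exit G S
      ((hconn.preconnected w.val v).some) w.prop (Set.mem_insert _ _)
    have hxc : (G.induce Sᶜ).connectedComponentMk x = c := by
      rw [← hw]
      exact (SimpleGraph.ConnectedComponent.sound hre).symm
    have hyv : y ≠ v := by
      rintro rfl
      exact x.prop (Set.mem_insert_iff.mpr (Or.inr (G.adj_symm hxy)))
    have hyN : y ∈ G.neighborFinset v := by
      rcases Set.mem_insert_iff.mp hy with h | h
      · exact absurd h hyv
      · simpa using h
    refine ⟨x.val, ?_, x.prop, by simpa using hxc⟩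
    rw [hBdef]
    refine Finset.mem_biUnion.mpr ⟨y, hyN, ?_⟩
    rw [Finset.mem_sdiff]
    constructor
    · simpa using (G.adj_symm hxy)
    · intro hmem
      apply x.prop
      rcases Finset.mem_insert.mp hmem with h | h
      · exact h ▸ Set.mem_insert _ _
      · exact Set.mem_insert_iff.mpr (Or.inr (by simpa using h))
  choose f hfB hfc hfmk using hbd
  -- number of components ≤ B.card
  have hm : Fintype.card (G.induce Sᶜ).ConnectedComponent ≤ B.card := by
    rw [← Finset.card_univ]
    apply Finset.card_le_card_of_injOn f (fun c _ => hfB c)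
    intro c1 _ c2 _ hf
    rw [← hfmk c1, ← hfmk c2]
    congr 1
    exact Subtype.ext hf
  -- B.card ≤ d * n^{1/4} in ℝ
  have hB : (B.card : ℝ) ≤ (d : ℝ) * (n : ℝ) ^ ((1 : ℝ) / 4) := by
    calc (B.card : ℝ) ≤ ∑ u ∈ G.neighborFinset v,
          (((G.neighborFinset u) \ (insert v (G.neighborFinset v))).card : ℝ) := by
          rw [hBdef]; push_cast; exact_mod_cast Finset.card_biUnion_le
      _ ≤ (G.neighborFinset v).card * (n : ℝ) ^ ((1 : ℝ) / 4) := by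
          rw [← nsmul_eq_mul]
          exact Finset.sum_le_card_nsmul _ _ _ (fun u hu => (hdegu u hu).le)
      _ = (d : ℝ) * (n : ℝ) ^ ((1 : ℝ) / 4) := by rw [hddef, SimpleGraph.degree]
  -- total vertex count outside S
  have hdn : d ≤ n := by
    have := G.degree_lt_card_verts v
    omega
  have hcardSc : (Fintype.card ↥(Sᶜ) : ℝ) = (n : ℝ) - (d : ℝ) := by
    have h1 : Fintype.card ↥(Sᶜ) = (Sᶜ).ncard := by
      rw [Fintype.card_eq_nat_card, Nat.card_coe_set_eq]
    have h2 : S.ncard = d + 1 := by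
      rw [hSdef, Set.ncard_insert_of_notMem (by simp) (Set.toFinite _)]
      rw [Set.ncard_eq_toFinset_card']
      simp [hddef, SimpleGraph.degree, SimpleGraph.neighborFinset]
    have h3 : (Sᶜ).ncard = Fintype.card V - S.ncard := by
      rw [← Nat.card_eq_fintype_card, ← Set.ncard_univ,
        show Sᶜ = Set.univ \ S from (Set.compl_eq_univ_diff S)]
      exact Set.ncard_diff (Set.subset_univ S) (Set.toFinite _)
    rw [h1, h3, h2, hcard]
    have : n + 1 - (d + 1) = n - d := by omega
    rw [this, Nat.cast_sub hdn]
  -- the sum over components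
  have hsum : ∑ c : (G.induce Sᶜ).ConnectedComponent, (c.supp.ncard : ℝ)
      = (n : ℝ) - (d : ℝ) := by
    rw [← hcardSc]
    exact_mod_cast congrArg Nat.cast (sum_supp_ncard (G.induce Sᶜ))
  -- split into big and small components
  set P : (G.induce Sᶜ).ConnectedComponent → Prop :=
    fun c => Real.sqrt n / (r : ℝ) ^ 2 ≤ (c.supp.ncard : ℝ) with hPdef
  have hgoal : ({c : (G.induce Sᶜ).ConnectedComponent | P c}.ncard : ℝ)
      = ((Finset.univ.filter P).card : ℝ) := by
    congr 1
    rw [Set.ncard_eq_toFinset_card', Set.toFinset_setOf]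
  rw [show {c : (G.induce ((insert v (G.neighborSet v))ᶜ)).ConnectedComponent |
        Real.sqrt n / (r : ℝ) ^ 2 ≤ (c.supp.ncard : ℝ)}
      = {c : (G.induce Sᶜ).ConnectedComponent | P c} from rfl, hgoal]
  set K : ℝ := ((Finset.univ.filter P).card : ℝ) with hKdef
  set M : ℝ := ((Finset.univ.filter (fun c => ¬ P c)).card : ℝ) with hMdef
  have hsplit : (n : ℝ) - (d : ℝ) ≤ K * ((n : ℝ) / (r : ℝ) ^ 4)
      + M * (Real.sqrt n / (r : ℝ) ^ 2) := by
    rw [← hsum, ← Finset.sum_filter_add_sum_filter_not Finset.univ P]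
    gcongr ?_ + ?_
    · rw [hKdef, ← nsmul_eq_mul]
      exact Finset.sum_le_card_nsmul _ _ _ (fun c _ => hsmall c)
    · rw [hMdef, ← nsmul_eq_mul]
      refine Finset.sum_le_card_nsmul _ _ _ (fun c hc => ?_)
      have := (Finset.mem_filter.mp hc).2
      rw [hPdef] at this
      exact (not_le.mp this).le
  have hMB : M ≤ (d : ℝ) * (n : ℝ) ^ ((1 : ℝ) / 4) := by
    refine le_trans ?_ hB
    rw [hMdef]
    exact_mod_cast le_trans (Nat.cast_le.mpr (Finset.card_le_card (Finset.filter_subset _ _)))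
      (le_trans (Nat.cast_le.mpr (by rw [Finset.card_univ]; exact hm)) le_rfl)
  -- arithmetic
  have hnpos : (0 : ℝ) < n := by positivity
  have hqpos : (0 : ℝ) < (n : ℝ) ^ ((1 : ℝ) / 4) := by positivity
  have hq2 : (n : ℝ) ^ ((1 : ℝ) / 4) * (n : ℝ) ^ ((1 : ℝ) / 4) = Real.sqrt n := by
    rw [← Real.rpow_add hnpos, Real.sqrt_eq_rpow]
    norm_num
  have hs2 : Real.sqrt n * Real.sqrt n = (n : ℝ) := Real.mul_self_sqrt hnpos.le
  exact aux_arith (r : ℝ) ((n : ℝ) ^ ((1 : ℝ) / 4)) (Real.sqrt n) (n : ℝ) (d : ℝ) M K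
    (by exact_mod_cast hr) (by exact_mod_cast hn) hq2 hs2 hqpos hnpos hdegv hMB hsplit
end
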